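/- Let G be a graph on n vertices and let q ∈ [0,1]. Then G contains at least one of the following: (i) a relatively q-full induced subgraph on ⌈qn⌉ vertices; or (ii) a relatively (1-q)-full induced subgraph on ⌊(1-q)n⌋ vertices; or (iii) both a relatively q-full induced subgraph on ⌈qn⌉ + 1 vertices and a relatively (1-q)-full induced subgraph on ⌊(1-q)n⌋ + 1 vertices. -/

import Mathlib

open scoped Classical

/-- Number of neighbours of `v` inside `S`. -/
noncomputable def degIn {V : Type*} (G : SimpleGraph V) (S : Finset V) (v : V) : ℕ :=
  (S.filter fun u => G.Adj v u).card

/-- `S` induces a full subgraph for density `p`: every vertex of `S` has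
at least `p * (|S| - 1)` neighbours inside `S`. -/
def IsFull {V : Type*} (G : SimpleGraph V) (p : ℝ) (S : Finset V) : Prop :=
  ∀ v ∈ S, p * ((S.card : ℝ) - 1) ≤ (degIn G S v : ℝ)

/-- `S` induces a relatively `q`-full subgraph: every `v ∈ S` has at least `q · d_G(v)`
neighbours inside `S`. -/
def RelFull {V : Type*} [Fintype V] (G : SimpleGraph V) (q : ℝ) (S : Finset V) : Prop :=
  ∀ v ∈ S, q * (G.degree v : ℝ) ≤ (degIn G S v : ℝ)

section Aux

variable {V : Type*} (G : SimpleGraph V)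

lemma degIn_mono {S T : Finset V} (h : S ⊆ T) (v : V) : degIn G S v ≤ degIn G T v :=
  Finset.card_le_card (Finset.filter_subset_filter _ h)

lemma degIn_insert {S : Finset V} {x : V} (hx : x ∉ S) (y : V) :
    degIn G (insert x S) y = degIn G S y + (if G.Adj y x then 1 else 0) := by
  unfold degIn
  by_cases h : G.Adj y x
  · rw [Finset.filter_insert, if_pos h,
      Finset.card_insert_of_notMem (fun hm => hx (Finset.mem_filter.mp hm).1), if_pos h]
  · rw [Finset.filter_insert, if_neg h, if_neg h, add_zero]

lemma degIn_erase_self (S : Finset V) (v : V) : degIn G (S.erase v) v = degIn G S v := by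
  unfold degIn
  congr 1
  ext u
  simp only [Finset.mem_filter, Finset.mem_erase]
  constructor
  · rintro ⟨⟨_, hu⟩, ha⟩; exact ⟨hu, ha⟩
  · rintro ⟨hu, ha⟩; exact ⟨⟨fun h => G.loopless.irrefl v (h ▸ ha), hu⟩, ha⟩

/-- Sum of degrees inside `S` (twice the number of edges). -/
noncomputable def wsum (S : Finset V) : ℕ := ∑ v ∈ S, degIn G S v

lemma sum_ite_adj (S : Finset V) (x : V) :
    (∑ y ∈ S, if G.Adj y x then 1 else 0) = degIn G S x := by
  unfold degIn
  rw [Finset.card_filter]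
  exact Finset.sum_congr rfl fun y _ => if_congr (G.adj_comm y x) rfl rfl

lemma wsum_insert {S : Finset V} {x : V} (hx : x ∉ S) :
    wsum G (insert x S) = wsum G S + 2 * degIn G S x := by
  unfold wsum
  rw [Finset.sum_insert hx, degIn_insert G hx x, if_neg (G.loopless.irrefl x), add_zero]
  have h2 : ∀ y ∈ S, degIn G (insert x S) y = degIn G S y + (if G.Adj y x then 1 else 0) :=
    fun y _ => degIn_insert G hx y
  rw [Finset.sum_congr rfl h2, Finset.sum_add_distrib, sum_ite_adj G S x]
  ring

lemma degIn_univ [Fintype V] (v : V) : degIn G Finset.univ v = G.degree v := by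
  unfold degIn
  have h : (Finset.univ.filter fun u => G.Adj v u) = G.neighborFinset v := by
    ext u; simp
  rw [h, SimpleGraph.card_neighborFinset_eq_degree]

lemma degIn_add_compl [Fintype V] (S : Finset V) (v : V) :
    degIn G S v + degIn G Sᶜ v = G.degree v := by
  rw [← degIn_univ G v]
  unfold degIn
  rw [← Finset.card_union_of_disjoint
      (Finset.disjoint_filter_filter disjoint_compl_right),
    ← Finset.filter_union, Finset.union_compl]

end Aux

set_option maxHeartbeats 2000000 in
/-- for every `q ∈ [0,1]`, an `n`-vertex graph contains (i) a relatively
`q`-full subgraph on `⌈qn⌉` vertices, or (ii) a relatively `(1-q)`-full subgraph on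
`⌊(1-q)n⌋` vertices, or (iii) both a relatively `q`-full subgraph on `⌈qn⌉ + 1` vertices
and a relatively `(1-q)`-full subgraph on `⌊(1-q)n⌋ + 1` vertices. -/
theorem stmt12 {V : Type*} [Fintype V] (G : SimpleGraph V) (q : ℝ)
    (hq0 : 0 ≤ q) (hq1 : q ≤ 1) :
    (∃ S : Finset V, RelFull G q S ∧ S.card = ⌈q * (Fintype.card V : ℝ)⌉₊) ∨
    (∃ S : Finset V, RelFull G (1 - q) S ∧ S.card = ⌊(1 - q) * (Fintype.card V : ℝ)⌋₊) ∨
    ((∃ S : Finset V, RelFull G q S ∧ S.card = ⌈q * (Fintype.card V : ℝ)⌉₊ + 1) ∧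
     (∃ S : Finset V, RelFull G (1 - q) S ∧
        S.card = ⌊(1 - q) * (Fintype.card V : ℝ)⌋₊ + 1)) := by
  set n := Fintype.card V with hn
  set a := ⌈q * (n : ℝ)⌉₊ with haa
  have hn0 : (0:ℝ) ≤ q * n := mul_nonneg hq0 (Nat.cast_nonneg n)
  have ha_le : a ≤ n := by
    rw [haa]
    exact Nat.ceil_le.mpr (by nlinarith [show (0:ℝ) ≤ (n:ℝ) from Nat.cast_nonneg n])
  have h1 : (q * n : ℝ) ≤ a := Nat.le_ceil _
  have h2 : (a:ℝ) < q * n + 1 := Nat.ceil_lt_add_one hn0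
  have hfloor : ⌊(1 - q) * (n:ℝ)⌋₊ = n - a := by
    rw [Nat.floor_eq_iff (by nlinarith)]
    rw [Nat.cast_sub ha_le]
    constructor <;> nlinarith
  obtain ⟨A0, -, hA0card⟩ := Finset.exists_subset_card_eq (s := (Finset.univ : Finset V)) (n := a)
    (by simpa using ha_le)
  set F : Finset V → ℝ := fun S => (1 - q) * (wsum G S) + q * (wsum G Sᶜ) with hF
  obtain ⟨A, hAs, hmax⟩ := Finset.exists_max_image (Finset.univ.powersetCard a) F
    ⟨A0, Finset.mem_powersetCard.mpr ⟨Finset.subset_univ _, hA0card⟩⟩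
  have hAcard : A.card = a := (Finset.mem_powersetCard.mp hAs).2
  have hBcard : Aᶜ.card = n - a := by rw [Finset.card_compl, hAcard]
  have hdeg : ∀ x : V, (degIn G A x : ℝ) + (degIn G Aᶜ x : ℝ) = G.degree x := by
    intro x; exact_mod_cast degIn_add_compl G A x
  -- the key swapping inequality
  have key : ∀ v ∈ A, ∀ u ∈ Aᶜ,
      (1 - q) * (degIn G A u : ℝ) + q * (degIn G Aᶜ v : ℝ) ≤
      (1 - q) * (degIn G A v : ℝ) + q * (degIn G Aᶜ u : ℝ) +
        (if G.Adj u v then (1:ℝ) else 0) := by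
    intro v hv u hu
    have huA : u ∉ A := Finset.mem_compl.mp hu
    have huv : u ≠ v := fun h => huA (h ▸ hv)
    set A₀ := A.erase v with hA₀
    have hvA₀ : v ∉ A₀ := Finset.notMem_erase v A
    have hiA : insert v A₀ = A := Finset.insert_erase hv
    have huA₀ : u ∉ A₀ := fun h => huA (Finset.erase_subset _ _ h)
    set B := Aᶜ with hB
    set B₀ := B.erase u with hB₀
    have huB₀ : u ∉ B₀ := Finset.notMem_erase u B
    have hiB : insert u B₀ = B := Finset.insert_erase hu
    have hvB : v ∉ B := by simp [hB, hv]
    have hvB₀ : v ∉ B₀ := fun h => hvB (Finset.erase_subset _ _ h)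
    set A' := insert u A₀ with hA'
    have ha1 : 1 ≤ a := hAcard ▸ Finset.card_pos.mpr ⟨v, hv⟩
    have hA'compl : A'ᶜ = insert v B₀ := by
      ext x
      simp only [hA', hA₀, hB₀, hB, Finset.mem_compl, Finset.mem_insert, Finset.mem_erase]
      by_cases hxv : x = v <;> by_cases hxu : x = u <;> simp_all
    have hA'card : A'.card = a := by
      rw [hA', Finset.card_insert_of_notMem huA₀, hA₀, Finset.card_erase_of_mem hv, hAcard]
      omega
    have hle := hmax A' (Finset.mem_powersetCard.mpr ⟨Finset.subset_univ _, hA'card⟩)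
    simp only [hF] at hle
    have e1 : wsum G A = wsum G A₀ + 2 * degIn G A v := by
      conv_lhs => rw [← hiA, wsum_insert G hvA₀]
      rw [hA₀, degIn_erase_self]
    have e2 : wsum G A' = wsum G A₀ + 2 * degIn G A₀ u := wsum_insert G huA₀
    have e3 : wsum G B = wsum G B₀ + 2 * degIn G B u := by
      conv_lhs => rw [← hiB, wsum_insert G huB₀]
      rw [hB₀, degIn_erase_self]
    have e4 : wsum G A'ᶜ = wsum G B₀ + 2 * degIn G B₀ v := by
      rw [hA'compl, wsum_insert G hvB₀]
    have e5 : degIn G A u = degIn G A₀ u + (if G.Adj u v then 1 else 0) := by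
      conv_lhs => rw [← hiA, degIn_insert G hvA₀ u]
    have e6 : degIn G B v = degIn G B₀ v + (if G.Adj u v then 1 else 0) := by
      conv_lhs => rw [← hiB, degIn_insert G huB₀ v]
      rw [show (if G.Adj v u then 1 else 0) = (if G.Adj u v then 1 else 0) from
        if_congr (G.adj_comm v u) rfl rfl]
    have r1 : (wsum G A : ℝ) = (wsum G A₀ : ℝ) + 2 * (degIn G A v : ℝ) := by
      exact_mod_cast e1
    have r2 : (wsum G A' : ℝ) = (wsum G A₀ : ℝ) + 2 * (degIn G A₀ u : ℝ) := by
      exact_mod_cast e2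
    have r3 : (wsum G B : ℝ) = (wsum G B₀ : ℝ) + 2 * (degIn G B u : ℝ) := by
      exact_mod_cast e3
    have r4 : (wsum G A'ᶜ : ℝ) = (wsum G B₀ : ℝ) + 2 * (degIn G B₀ v : ℝ) := by
      exact_mod_cast e4
    have r5 : (degIn G A u : ℝ) = (degIn G A₀ u : ℝ) + (if G.Adj u v then (1:ℝ) else 0) := by
      by_cases hadj : G.Adj u v
      · rw [if_pos hadj]; rw [if_pos hadj] at e5; exact_mod_cast e5
      · rw [if_neg hadj]; rw [if_neg hadj] at e5; rw [add_zero]; exact_mod_cast e5.trans (add_zero _)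
    have r6 : (degIn G B v : ℝ) = (degIn G B₀ v : ℝ) + (if G.Adj u v then (1:ℝ) else 0) := by
      by_cases hadj : G.Adj u v
      · rw [if_pos hadj]; rw [if_pos hadj] at e6; exact_mod_cast e6
      · rw [if_neg hadj]; rw [if_neg hadj] at e6; rw [add_zero]; exact_mod_cast e6.trans (add_zero _)
    rw [r1, r2, r3, r4] at hle
    rw [r5, r6]
    linarith [hle]
  -- case analysis
  by_cases hfull : ∀ v ∈ A, q * (G.degree v : ℝ) ≤ (degIn G A v : ℝ)
  · exact Or.inl ⟨A, hfull, hAcard⟩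
  by_cases hfullB : ∀ u ∈ Aᶜ, (1 - q) * (G.degree u : ℝ) ≤ (degIn G Aᶜ u : ℝ)
  · exact Or.inr (Or.inl ⟨Aᶜ, hfullB, by rw [hfloor]; exact hBcard⟩)
  push_neg at hfull hfullB
  obtain ⟨v, hv, hbadv⟩ := hfull
  obtain ⟨u, hu, hbadu⟩ := hfullB
  have huA : u ∉ A := Finset.mem_compl.mp hu
  have hvB : v ∉ Aᶜ := fun h => (Finset.mem_compl.mp h) hv
  -- any bad pair is adjacent
  have hadj : ∀ w ∈ A, ∀ x ∈ Aᶜ, (degIn G A w : ℝ) < q * G.degree w →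
      (degIn G Aᶜ x : ℝ) < (1 - q) * G.degree x → G.Adj x w := by
    intro w hw x hx hbw hbx
    by_contra hnadj
    have hk := key w hw x hx
    rw [if_neg hnadj, add_zero] at hk
    have hdw : (G.degree w : ℝ) = degIn G A w + degIn G Aᶜ w := (hdeg w).symm
    have hdx : (G.degree x : ℝ) = degIn G A x + degIn G Aᶜ x := (hdeg x).symm
    rw [hdw] at hbw
    rw [hdx] at hbx
    nlinarith [hk, hbw, hbx]
  refine Or.inr (Or.inr ⟨⟨insert u A, ?_, ?_⟩, ⟨insert v Aᶜ, ?_, ?_⟩⟩)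
  · -- RelFull q (insert u A)
    intro w hw
    rcases Finset.mem_insert.mp hw with h | hwA
    · subst h
      have hins : degIn G (insert w A) w = degIn G A w := by
        rw [degIn_insert G huA w, if_neg (G.loopless.irrefl w), add_zero]
      rw [hins]
      have hdu : (G.degree w : ℝ) = degIn G A w + degIn G Aᶜ w := (hdeg w).symm
      rw [hdu] at hbadu ⊢
      nlinarith [hbadu]
    · by_cases hgood : q * (G.degree w : ℝ) ≤ (degIn G A w : ℝ)
      · have hmono : (degIn G A w : ℝ) ≤ degIn G (insert u A) w := by
          exact_mod_cast degIn_mono G (Finset.subset_insert u A) w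
        linarith
      · push_neg at hgood
        have hadjw : G.Adj u w := hadj w hwA u hu hgood hbadu
        have hins : degIn G (insert u A) w = degIn G A w + 1 := by
          rw [degIn_insert G huA w, if_pos hadjw.symm]
        have hk := key w hwA u hu
        rw [if_pos hadjw] at hk
        rw [hins]
        have hdw : (G.degree w : ℝ) = degIn G A w + degIn G Aᶜ w := (hdeg w).symm
        have hdu : (G.degree u : ℝ) = degIn G A u + degIn G Aᶜ u := (hdeg u).symm
        rw [hdw]
        rw [hdu] at hbadu
        push_cast
        nlinarith [hk, hbadu]
  · rw [Finset.card_insert_of_notMem huA, hAcard]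
  · -- RelFull (1-q) (insert v Aᶜ)
    intro x hx
    rcases Finset.mem_insert.mp hx with h | hxB
    · subst h
      have hins : degIn G (insert x Aᶜ) x = degIn G Aᶜ x := by
        rw [degIn_insert G hvB x, if_neg (G.loopless.irrefl x), add_zero]
      rw [hins]
      have hdv : (G.degree x : ℝ) = degIn G A x + degIn G Aᶜ x := (hdeg x).symm
      rw [hdv] at hbadv ⊢
      nlinarith [hbadv]
    · by_cases hgood : (1 - q) * (G.degree x : ℝ) ≤ (degIn G Aᶜ x : ℝ)
      · have hmono : (degIn G Aᶜ x : ℝ) ≤ degIn G (insert v Aᶜ) x := by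
          exact_mod_cast degIn_mono G (Finset.subset_insert v Aᶜ) x
        linarith
      · push_neg at hgood
        have hadjx : G.Adj x v := hadj v hv x hxB hbadv hgood
        have hins : degIn G (insert v Aᶜ) x = degIn G Aᶜ x + 1 := by
          rw [degIn_insert G hvB x, if_pos hadjx]
        have hk := key v hv x hxB
        rw [if_pos hadjx] at hk
        rw [hins]
        have hdx : (G.degree x : ℝ) = degIn G A x + degIn G Aᶜ x := (hdeg x).symm
        have hdv : (G.degree v : ℝ) = degIn G A v + degIn G Aᶜ v := (hdeg v).symm
        rw [hdx]
        rw [hdv] at hbadv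
        push_cast
        nlinarith [hk, hbadv]
  · rw [Finset.card_insert_of_notMem hvB, hBcard, hfloor]
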